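/- Lemma 4 (CPO performance-difference bound, finite-state version). Let a finite Markov decision process with discount factor γ ∈ [0,1) be given, let f : S × A × S → ℝ, and let π and π' be stationary policies such that for every s ∈ S and a ∈ A, π(a|s) = 0 implies π'(a|s) = 0. Define δ = Σ_{s} d^π(s) · D_KL(π'(·|s) ‖ π(·|s)), where D_KL(p‖q) = Σ_{a : p(a) > 0} p(a)·log(p(a)/q(a)), and define ε = max_{s∈S} |Σ_{a} π'(a|s) · A_f^π(s,a)|. Then J_f(π') − J_f(π) ≤ (1/(1−γ)) · ( Σ_{s} d^π(s) · Σ_{a} π'(a|s) · A_f^π(s,a) + γ·ε·√(2δ)/(1−γ) ) and J_f(π') − J_f(π) ≥ (1/(1−γ)) · ( Σ_{s} d^π(s) · Σ_{a} π'(a|s) · A_f^π(s,a) − γ·ε·√(2δ)/(1−γ) ). -/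

import Mathlib

open Finset

/-- A finite Markov decision process. -/
structure MDP (S A : Type) [Fintype S] [Fintype A] where
  P : S → A → S → ℝ
  P_nonneg : ∀ s a s', 0 ≤ P s a s'
  P_sum : ∀ s a, ∑ s', P s a s' = 1
  μ : S → ℝ
  μ_nonneg : ∀ s, 0 ≤ μ s
  μ_sum : ∑ s, μ s = 1
  γ : ℝ
  γ_nonneg : 0 ≤ γ
  γ_lt_one : γ < 1

/-- A stationary policy: a probability distribution over actions for each state. -/
def IsPolicy {S A : Type} [Fintype S] [Fintype A] (π : S → A → ℝ) : Prop :=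
  (∀ s a, 0 ≤ π s a) ∧ (∀ s, ∑ a, π s a = 1)

/-- The time-`t` state distribution `μ_t^π`. -/
def stateDist {S A : Type} [Fintype S] [Fintype A] (M : MDP S A) (π : S → A → ℝ) :
    ℕ → S → ℝ
  | 0 => M.μ
  | (t + 1) => fun s' => ∑ s, ∑ a, stateDist M π t s * π s a * M.P s a s'

/-- The expected discounted return `J_f(π)`. -/
noncomputable def Jret {S A : Type} [Fintype S] [Fintype A] (M : MDP S A)
    (π : S → A → ℝ) (f : S → A → S → ℝ) : ℝ :=
  ∑' t : ℕ, M.γ ^ t * ∑ s, ∑ a, ∑ s', stateDist M π t s * π s a * M.P s a s' * f s a s'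

/-- The discounted future state distribution `d^π`. -/
noncomputable def dDist {S A : Type} [Fintype S] [Fintype A] (M : MDP S A)
    (π : S → A → ℝ) (s : S) : ℝ :=
  (1 - M.γ) * ∑' t : ℕ, M.γ ^ t * stateDist M π t s

/-- `V` satisfies the Bellman equation for `f` under policy `π`. -/
def IsValue {S A : Type} [Fintype S] [Fintype A] (M : MDP S A) (π : S → A → ℝ)
    (f : S → A → S → ℝ) (V : S → ℝ) : Prop :=
  ∀ s, V s = ∑ a, π s a * ∑ s', M.P s a s' * (f s a s' + M.γ * V s')

/-- The advantage function `A_f^π` built from a value function `V`. -/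
def adv {S A : Type} [Fintype S] [Fintype A] (M : MDP S A)
    (f : S → A → S → ℝ) (V : S → ℝ) (s : S) (a : A) : ℝ :=
  (∑ s', M.P s a s' * (f s a s' + M.γ * V s')) - V s
/-- Kullback–Leibler divergence between probability distributions on a finite set. -/
noncomputable def klDiv {A : Type} [Fintype A] (p q : A → ℝ) : ℝ :=
  ∑ a, if 0 < p a then p a * Real.log (p a / q a) else 0

/-!
By the performance difference lemma, `J(π') - J(π) = (1 / (1 - γ)) ∑ₛ d^{π'}(s) Ā(s)` with
`Ā(s) = ∑ₐ π'(a|s) A^π(s, a)`, and replacing `d^{π'}` by `d^π` costs at most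
`ε ‖d^{π'} - d^π‖₁`. Comparing the two state processes one step at a time gives
`‖μ'_{t+1} - μ_{t+1}‖₁ ≤ ‖μ'_t - μ_t‖₁ + E_{μ_t} ‖π'(·|s) - π(·|s)‖₁`; summing with weights `γᵗ`
yields `‖d^{π'} - d^π‖₁ ≤ γ / (1 - γ) · E_{d^π} ‖π'(·|s) - π(·|s)‖₁`. Pinsker's inequality in
each state and Jensen's inequality for `√` bound the last expectation by `√(2δ)`.
-/

section Pinsker

open Real InformationTheory

lemma hasDerivAt_klFun_sub_three_mul_sq_div {x : ℝ} (hx : 0 < x) :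
    HasDerivAt (fun x => klFun x - 3 * (x - 1) ^ 2 / (2 * (x + 2)))
      (log x - 3 / 2 + 27 / (2 * (x + 2) ^ 2)) x := by
  have hx2 : 2 * (x + 2) ≠ 0 := by positivity
  refine ((hasDerivAt_klFun hx.ne').sub
    ((((hasDerivAt_id x).sub_const 1).pow 2).const_mul 3 |>.div
      (((hasDerivAt_id x).add_const 2).const_mul 2) hx2)).congr_deriv ?_
  simp only [id, Pi.pow_apply]
  field_simp
  ring

lemma three_mul_sq_div_le_klFun {x : ℝ} (hx : 0 < x) :
    3 * (x - 1) ^ 2 / (2 * (x + 2)) ≤ klFun x := by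
  set h : ℝ → ℝ := fun x => klFun x - 3 * (x - 1) ^ 2 / (2 * (x + 2)) with h_def
  set h' : ℝ → ℝ := fun x => log x - 3 / 2 + 27 / (2 * (x + 2) ^ 2) with h'_def
  have hasDerivAt_h' {y : ℝ} (hy : 0 < y) : HasDerivAt h' (1 / y - 27 / (y + 2) ^ 3) y := by
    have hy2 : 2 * (y + 2) ^ 2 ≠ 0 := by positivity
    refine (((hasDerivAt_log hy.ne').sub_const (3 / 2)).add
      ((hasDerivAt_const y (27 : ℝ)).div
        ((((hasDerivAt_id y).add_const 2).pow 2).const_mul 2) hy2)).congr_deriv ?_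
    simp only [id, Pi.pow_apply]
    field_simp
    ring
  have hconvex : ConvexOn ℝ (Set.Ioi 0) h := by
    refine convexOn_of_hasDerivWithinAt2_nonneg (f' := h')
      (f'' := fun y => 1 / y - 27 / (y + 2) ^ 3) (convex_Ioi 0)
      (fun y hy => (hasDerivAt_klFun_sub_three_mul_sq_div hy).continuousAt.continuousWithinAt)
      (fun y hy => ?_) (fun y hy => ?_) (fun y hy => ?_) <;> rw [interior_Ioi] at hy
    · exact (hasDerivAt_klFun_sub_three_mul_sq_div hy).hasDerivWithinAt
    · exact (hasDerivAt_h' hy).hasDerivWithinAt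
    · -- `(y + 2)^3 - 27 y = (y - 1)^2 (y + 8)`
      have hy : (0 : ℝ) < y := hy
      rw [sub_nonneg, div_le_div_iff₀ (by positivity) hy]
      nlinarith [mul_nonneg (sq_nonneg (y - 1)) hy.le]
  have hderiv_one : HasDerivAt h 0 1 := by
    convert hasDerivAt_klFun_sub_three_mul_sq_div one_pos using 1
    norm_num
  have h_one : h 1 = 0 := by norm_num [h_def, klFun_one]
  suffices 0 ≤ h x by simpa only [h_def, sub_nonneg] using this
  rcases lt_trichotomy x 1 with hlt | rfl | hgt
  · have := hconvex.slope_le_of_hasDerivAt hx (Set.mem_Ioi.2 one_pos) hlt hderiv_one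
    rw [slope_def_field, h_one, zero_sub, div_nonpos_iff] at this
    rcases this with ⟨-, h2⟩ | ⟨h1, -⟩ <;> linarith
  · exact h_one.ge
  · have := hconvex.le_slope_of_hasDerivAt (Set.mem_Ioi.2 one_pos) hx hgt hderiv_one
    rw [slope_def_field, h_one, sub_zero] at this
    exact (div_nonneg_iff.1 this).elim (·.1) fun h => absurd h.2 (by linarith)

lemma three_mul_sq_div_le_klDiv_summand {p q : ℝ} (hp : 0 ≤ p) (hq : 0 ≤ q)
    (hpq : 0 < p → 0 < q) :
    3 * (p - q) ^ 2 / (2 * (p + 2 * q)) ≤ (if 0 < p then p * log (p / q) else 0) - p + q := by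
  rcases hp.lt_or_eq with hp | rfl
  · have hq := hpq hp
    have key := mul_le_mul_of_nonneg_left (three_mul_sq_div_le_klFun (div_pos hp hq)) hq.le
    rw [if_pos hp]
    have hq0 : q ≠ 0 := hq.ne'
    refine (le_of_eq ?_).trans (key.trans_eq ?_)
    · rw [div_sub_one hq0, div_add' _ _ _ hq0]
      field_simp
    · rw [klFun_apply]
      field_simp
      ring
  · rcases hq.lt_or_eq with hq | rfl
    · rw [div_le_iff₀ (by positivity)]
      simp only [lt_irrefl, if_false]
      nlinarith
    · simp

variable {A : Type} [Fintype A] {p q : A → ℝ}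

lemma sum_three_mul_sq_div_le_klDiv (hp : ∀ a, 0 ≤ p a) (hq : ∀ a, 0 ≤ q a)
    (hp1 : ∑ a, p a = 1) (hq1 : ∑ a, q a = 1) (hpq : ∀ a, q a = 0 → p a = 0) :
    ∑ a, 3 * (p a - q a) ^ 2 / (2 * (p a + 2 * q a)) ≤ klDiv p q := by
  have := sum_le_sum fun a (_ : a ∈ univ) => three_mul_sq_div_le_klDiv_summand (hp a) (hq a)
    fun hpa => (hq a).lt_of_ne fun h => hpa.ne' (hpq a h.symm)
  rwa [sum_add_distrib, sum_sub_distrib, hp1, hq1, sub_add_cancel] at this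

lemma klDiv_nonneg (hp : ∀ a, 0 ≤ p a) (hq : ∀ a, 0 ≤ q a)
    (hp1 : ∑ a, p a = 1) (hq1 : ∑ a, q a = 1) (hpq : ∀ a, q a = 0 → p a = 0) :
    0 ≤ klDiv p q :=
  (sum_nonneg fun a _ => by have := hp a; have := hq a; positivity).trans
    (sum_three_mul_sq_div_le_klDiv hp hq hp1 hq1 hpq)

/-- **Pinsker's inequality**. -/
theorem sum_abs_sub_le_sqrt_two_mul_klDiv (hp : ∀ a, 0 ≤ p a) (hq : ∀ a, 0 ≤ q a)
    (hp1 : ∑ a, p a = 1) (hq1 : ∑ a, q a = 1) (hpq : ∀ a, q a = 0 → p a = 0) :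
    ∑ a, |p a - q a| ≤ √(2 * klDiv p q) := by
  refine le_sqrt_of_sq_le ?_
  -- Cauchy–Schwarz against the weights `2 (p + 2 q) / 3`, which sum to `2`.
  have hcs := sum_sq_le_sum_mul_sum_of_sq_le_mul univ
    (f := fun a => 3 * (p a - q a) ^ 2 / (2 * (p a + 2 * q a)))
    (g := fun a => 2 * (p a + 2 * q a) / 3) (r := fun a => |p a - q a|)
    (fun a _ => by have := hp a; have := hq a; positivity)
    (fun a _ => by have := hp a; have := hq a; positivity) fun a _ => by
      rcases (add_nonneg (hp a) (mul_nonneg zero_le_two (hq a))).lt_or_eq with h | h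
      · rw [sq_abs, div_mul_div_cancel₀ (by positivity), mul_div_cancel_left₀ _ three_ne_zero]
      · have : p a = 0 ∧ q a = 0 := by constructor <;> linarith [hp a, hq a]
        simp [this]
  have hg : ∑ a, 2 * (p a + 2 * q a) / 3 = 2 := by
    simp only [← sum_div, ← mul_sum, sum_add_distrib, hp1, hq1]; norm_num
  rw [hg] at hcs
  nlinarith [sum_three_mul_sq_div_le_klDiv hp hq hp1 hq1 hpq]

end Pinsker

section Discounted

variable {γ : ℝ}

lemma summable_pow_mul_of_abs_le (hγ0 : 0 ≤ γ) (hγ1 : γ < 1) {c : ℕ → ℝ} {C : ℝ}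
    (hc : ∀ t, |c t| ≤ C) : Summable fun t => γ ^ t * c t := by
  refine .of_norm_bounded ((summable_geometric_of_lt_one hγ0 hγ1).mul_left C) fun t => ?_
  rw [norm_mul, norm_pow, Real.norm_eq_abs, Real.norm_eq_abs, abs_of_nonneg hγ0, mul_comm]
  exact mul_le_mul_of_nonneg_right (hc t) (pow_nonneg hγ0 t)

lemma abs_tsum_pow_mul_le (hγ0 : 0 ≤ γ) {c : ℕ → ℝ}
    (hc : Summable fun t => γ ^ t * |c t|) :
    |∑' t, γ ^ t * c t| ≤ ∑' t, γ ^ t * |c t| := by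
  have habs : ∀ t, ‖γ ^ t * c t‖ = γ ^ t * |c t| := fun t => by
    rw [Real.norm_eq_abs, abs_mul, abs_pow, abs_of_nonneg hγ0]
  simpa only [habs, Real.norm_eq_abs] using norm_tsum_le_tsum_norm (hc.congr fun t => (habs t).symm)

lemma one_sub_mul_tsum_le_of_succ_le_add (hγ0 : 0 ≤ γ) {e c : ℕ → ℝ} (he0 : e 0 = 0)
    (hstep : ∀ t, e (t + 1) ≤ e t + c t) (he : Summable fun t => γ ^ t * e t)
    (hc : Summable fun t => γ ^ t * c t) :
    (1 - γ) * ∑' t, γ ^ t * e t ≤ γ * ∑' t, γ ^ t * c t := by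
  have hshift : ∑' t, γ ^ t * e t = ∑' t, γ ^ (t + 1) * e (t + 1) := by
    rw [he.tsum_eq_zero_add, he0, mul_zero, zero_add]
  have hle : ∑' t, γ ^ (t + 1) * e (t + 1) ≤ ∑' t, γ * (γ ^ t * e t + γ ^ t * c t) := by
    refine Summable.tsum_le_tsum (fun t => ?_) ((summable_nat_add_iff 1).2 he)
      ((he.add hc).mul_left γ)
    rw [pow_succ, mul_comm _ γ, mul_assoc, ← mul_add]
    exact mul_le_mul_of_nonneg_left
      (by nlinarith [mul_le_mul_of_nonneg_left (hstep t) (pow_nonneg hγ0 t)]) hγ0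
  rw [← hshift, tsum_mul_left, he.tsum_add hc] at hle
  linarith

end Discounted

section StateDist

variable {S A : Type} [Fintype S] [Fintype A] (M : MDP S A) {π : S → A → ℝ}

lemma stateDist_nonneg (hπ : IsPolicy π) : ∀ t s, 0 ≤ stateDist M π t s
  | 0, s => M.μ_nonneg s
  | t + 1, s' => sum_nonneg fun s _ => sum_nonneg fun a _ =>
      mul_nonneg (mul_nonneg (stateDist_nonneg hπ t s) (hπ.1 s a)) (M.P_nonneg s a s')

lemma sum_stateDist_succ_mul (π : S → A → ℝ) (t : ℕ) (g : S → ℝ) :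
    ∑ s', stateDist M π (t + 1) s' * g s'
      = ∑ s, stateDist M π t s * ∑ a, π s a * ∑ s', M.P s a s' * g s' := by
  simp only [stateDist, sum_mul, mul_sum]
  rw [sum_comm]
  refine sum_congr rfl fun s _ => ?_
  rw [sum_comm]
  exact sum_congr rfl fun a _ => sum_congr rfl fun s' _ => by ring

lemma sum_stateDist (hπ : IsPolicy π) : ∀ t, ∑ s, stateDist M π t s = 1
  | 0 => M.μ_sum
  | t + 1 => by
    simpa only [mul_one, M.P_sum, hπ.2, sum_stateDist hπ t]
      using sum_stateDist_succ_mul M π t fun _ => 1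

lemma stateDist_le_one (hπ : IsPolicy π) (t : ℕ) (s : S) : stateDist M π t s ≤ 1 :=
  sum_stateDist M hπ t ▸ single_le_sum (fun s _ => stateDist_nonneg M hπ t s) (mem_univ s)

lemma abs_sum_stateDist_mul_le (hπ : IsPolicy π) (t : ℕ) (g : S → ℝ) :
    |∑ s, stateDist M π t s * g s| ≤ ∑ s, |g s| := by
  refine (abs_sum_le_sum_abs _ _).trans (sum_le_sum fun s _ => ?_)
  rw [abs_mul, abs_of_nonneg (stateDist_nonneg M hπ t s)]
  exact mul_le_of_le_one_left (abs_nonneg _) (stateDist_le_one M hπ t s)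

lemma summable_pow_mul_sum_stateDist_mul (hπ : IsPolicy π) (g : S → ℝ) :
    Summable fun t => M.γ ^ t * ∑ s, stateDist M π t s * g s :=
  summable_pow_mul_of_abs_le M.γ_nonneg M.γ_lt_one (abs_sum_stateDist_mul_le M hπ · g)

lemma summable_pow_mul_stateDist (hπ : IsPolicy π) (s : S) :
    Summable fun t => M.γ ^ t * stateDist M π t s :=
  summable_pow_mul_of_abs_le M.γ_nonneg M.γ_lt_one fun t => by
    rw [abs_of_nonneg (stateDist_nonneg M hπ t s)]; exact stateDist_le_one M hπ t s

lemma tsum_pow_mul_sum_stateDist_mul (hπ : IsPolicy π) (g : S → ℝ) :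
    ∑' t, M.γ ^ t * ∑ s, stateDist M π t s * g s
      = 1 / (1 - M.γ) * ∑ s, dDist M π s * g s := by
  have hγ : 1 - M.γ ≠ 0 := by linarith [M.γ_lt_one]
  simp only [mul_sum, dDist, ← mul_assoc]
  rw [Summable.tsum_finsetSum fun s _ => (summable_pow_mul_stateDist M hπ s).mul_right (g s)]
  refine sum_congr rfl fun s _ => ?_
  rw [tsum_mul_right]
  field_simp

lemma dDist_nonneg (hπ : IsPolicy π) (s : S) : 0 ≤ dDist M π s :=
  mul_nonneg (by linarith [M.γ_lt_one]) <| tsum_nonneg fun t =>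
    mul_nonneg (pow_nonneg M.γ_nonneg t) (stateDist_nonneg M hπ t s)

lemma sum_dDist (hπ : IsPolicy π) : ∑ s, dDist M π s = 1 := by
  have hγ : 1 - M.γ ≠ 0 := by linarith [M.γ_lt_one]
  have := tsum_pow_mul_sum_stateDist_mul M hπ fun _ => 1
  simp only [mul_one, sum_stateDist M hπ, tsum_geometric_of_lt_one M.γ_nonneg M.γ_lt_one] at this
  field_simp at this
  exact this.symm

end StateDist

section PerformanceDifference

variable {S A : Type} [Fintype S] [Fintype A] (M : MDP S A) {π : S → A → ℝ}

lemma sum_mul_adv_eq (hπ : IsPolicy π) (f : S → A → S → ℝ) (V : S → ℝ) (s : S) :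
    ∑ a, π s a * adv M f V s a
      = ∑ a, ∑ s', π s a * M.P s a s' * f s a s'
        + M.γ * ∑ a, π s a * ∑ s', M.P s a s' * V s' - V s := by
  simp only [adv, mul_sub, sum_sub_distrib, ← sum_mul, hπ.2 s, one_mul, mul_add,
    sum_add_distrib, mul_sum]
  congr 2
  · exact sum_congr rfl fun a _ => sum_congr rfl fun s' _ => by ring
  · exact sum_congr rfl fun a _ => sum_congr rfl fun s' _ => by ring

lemma sum_mul_adv_eq_zero (hπ : IsPolicy π) {f : S → A → S → ℝ} {V : S → ℝ}
    (hV : IsValue M π f V) (s : S) : ∑ a, π s a * adv M f V s a = 0 := by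
  simp only [adv, mul_sub, sum_sub_distrib, ← sum_mul, hπ.2 s, one_mul, ← hV s, sub_self]

lemma expected_reward_eq (hπ : IsPolicy π) (f : S → A → S → ℝ) (V : S → ℝ) (t : ℕ) :
    ∑ s, ∑ a, ∑ s', stateDist M π t s * π s a * M.P s a s' * f s a s'
      = ∑ s, stateDist M π t s * ∑ a, π s a * adv M f V s a
        + (∑ s, stateDist M π t s * V s - M.γ * ∑ s, stateDist M π (t + 1) s * V s) := by
  rw [sum_stateDist_succ_mul, mul_sum]
  simp only [sum_mul_adv_eq M hπ, ← sum_sub_distrib, ← sum_add_distrib]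
  refine sum_congr rfl fun s _ => ?_
  have hreward : ∑ a, ∑ s', stateDist M π t s * π s a * M.P s a s' * f s a s'
      = stateDist M π t s * ∑ a, ∑ s', π s a * M.P s a s' * f s a s' := by
    simp only [mul_sum, mul_assoc]
  rw [hreward]
  ring

lemma Jret_eq_tsum_adv_add (hπ : IsPolicy π) (f : S → A → S → ℝ) (V : S → ℝ) :
    Jret M π f = ∑' t, M.γ ^ t * ∑ s, stateDist M π t s * ∑ a, π s a * adv M f V s a
      + ∑ s, M.μ s * V s := by
  set W : ℕ → ℝ := fun t => M.γ ^ t * ∑ s, stateDist M π t s * V s with hW_def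
  have hW : Summable W := summable_pow_mul_sum_stateDist_mul M hπ V
  have hW_succ : Summable fun t => W (t + 1) := (summable_nat_add_iff 1).2 hW
  have hsplit : ∀ t,
      M.γ ^ t * ∑ s, ∑ a, ∑ s', stateDist M π t s * π s a * M.P s a s' * f s a s'
        = M.γ ^ t * ∑ s, stateDist M π t s * ∑ a, π s a * adv M f V s a
          + (W t - W (t + 1)) := by
    intro t
    simp only [expected_reward_eq M hπ f V t, hW_def, pow_succ]
    ring
  rw [Jret, tsum_congr hsplit, (summable_pow_mul_sum_stateDist_mul M hπ _).tsum_add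
    (hW.sub hW_succ), hW.tsum_sub hW_succ, hW.tsum_eq_zero_add, add_sub_cancel_right]
  simp [hW_def, stateDist]

/-- The **performance difference lemma** of Kakade and Langford. -/
theorem Jret_sub_Jret_eq {π' : S → A → ℝ} (hπ : IsPolicy π) (hπ' : IsPolicy π')
    {f : S → A → S → ℝ} {V : S → ℝ} (hV : IsValue M π f V) :
    Jret M π' f - Jret M π f
      = 1 / (1 - M.γ) * ∑ s, dDist M π' s * ∑ a, π' s a * adv M f V s a := by
  rw [Jret_eq_tsum_adv_add M hπ' f V, Jret_eq_tsum_adv_add M hπ f V,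
    tsum_pow_mul_sum_stateDist_mul M hπ']
  simp [sum_mul_adv_eq_zero M hπ hV]

end PerformanceDifference

section StateDistDiff

variable {S A : Type} [Fintype S] [Fintype A] (M : MDP S A) {π π' : S → A → ℝ}

lemma sum_abs_sum_mul_P_le (w : S → A → ℝ) :
    ∑ s', |∑ s, ∑ a, w s a * M.P s a s'| ≤ ∑ s, ∑ a, |w s a| := calc
  ∑ s', |∑ s, ∑ a, w s a * M.P s a s'| ≤ ∑ s', ∑ s, ∑ a, |w s a| * M.P s a s' := by
    refine sum_le_sum fun s' _ => (abs_sum_le_sum_abs _ _).trans <| sum_le_sum fun s _ =>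
      (abs_sum_le_sum_abs _ _).trans_eq <| sum_congr rfl fun a _ => ?_
    rw [abs_mul, abs_of_nonneg (M.P_nonneg s a s')]
  _ = ∑ s, ∑ a, |w s a| := by
    rw [sum_comm]
    refine sum_congr rfl fun s _ => ?_
    rw [sum_comm]
    simp only [← mul_sum, M.P_sum, mul_one]

lemma sum_abs_stateDist_succ_sub_le (hπ : IsPolicy π) (hπ' : IsPolicy π') (t : ℕ) :
    ∑ s, |stateDist M π' (t + 1) s - stateDist M π (t + 1) s|
      ≤ ∑ s, |stateDist M π' t s - stateDist M π t s|
        + ∑ s, stateDist M π t s * ∑ a, |π' s a - π s a| := by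
  have hdiff : ∀ s', stateDist M π' (t + 1) s' - stateDist M π (t + 1) s'
      = ∑ s, ∑ a,
          (stateDist M π' t s * π' s a - stateDist M π t s * π s a) * M.P s a s' := by
    intro s'
    simp only [stateDist, sub_mul, sum_sub_distrib]
  simp only [hdiff]
  refine (sum_abs_sum_mul_P_le M _).trans ?_
  calc ∑ s, ∑ a, |stateDist M π' t s * π' s a - stateDist M π t s * π s a|
      ≤ ∑ s, ∑ a, (|stateDist M π' t s - stateDist M π t s| * π' s a
          + stateDist M π t s * |π' s a - π s a|) := by
        refine sum_le_sum fun s _ => sum_le_sum fun a _ => ?_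
        have hsplit : stateDist M π' t s * π' s a - stateDist M π t s * π s a
            = (stateDist M π' t s - stateDist M π t s) * π' s a
              + stateDist M π t s * (π' s a - π s a) := by ring
        rw [hsplit, ← abs_of_nonneg (hπ'.1 s a), ← abs_of_nonneg (stateDist_nonneg M hπ t s),
          ← abs_mul, ← abs_mul, abs_of_nonneg (hπ'.1 s a),
          abs_of_nonneg (stateDist_nonneg M hπ t s)]
        exact abs_add_le _ _
    _ = _ := by simp only [sum_add_distrib, ← mul_sum, hπ'.2, mul_one]

theorem sum_abs_dDist_sub_le (hπ : IsPolicy π) (hπ' : IsPolicy π') :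
    ∑ s, |dDist M π' s - dDist M π s|
      ≤ M.γ / (1 - M.γ) * ∑ s, dDist M π s * ∑ a, |π' s a - π s a| := by
  have hγ : 0 < 1 - M.γ := by linarith [M.γ_lt_one]
  set e : ℕ → S → ℝ := fun t s => |stateDist M π' t s - stateDist M π t s| with he_def
  have he : ∀ s, Summable fun t => M.γ ^ t * e t s := fun s =>
    summable_pow_mul_of_abs_le M.γ_nonneg M.γ_lt_one fun t => by
      rw [abs_abs]
      exact abs_sub_le_of_nonneg_of_le (stateDist_nonneg M hπ' t s)
        (stateDist_le_one M hπ' t s) (stateDist_nonneg M hπ t s) (stateDist_le_one M hπ t s)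
  have hpointwise :
      ∀ s, |dDist M π' s - dDist M π s| ≤ (1 - M.γ) * ∑' t, M.γ ^ t * e t s := by
    intro s
    rw [dDist, dDist, ← mul_sub, abs_mul, abs_of_pos hγ, ← Summable.tsum_sub
      (summable_pow_mul_stateDist M hπ' s) (summable_pow_mul_stateDist M hπ s)]
    simp only [← mul_sub]
    exact mul_le_mul_of_nonneg_left (abs_tsum_pow_mul_le M.γ_nonneg (he s)) hγ.le
  calc ∑ s, |dDist M π' s - dDist M π s|
      ≤ ∑ s, (1 - M.γ) * ∑' t, M.γ ^ t * e t s := sum_le_sum fun s _ => hpointwise s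
    _ = (1 - M.γ) * ∑' t, M.γ ^ t * ∑ s, e t s := by
        simp only [← mul_sum, ← Summable.tsum_finsetSum fun s _ => he s]
    _ ≤ M.γ * ∑' t, M.γ ^ t * ∑ s, stateDist M π t s * ∑ a, |π' s a - π s a| := by
        refine one_sub_mul_tsum_le_of_succ_le_add M.γ_nonneg (by simp [he_def, stateDist])
          (sum_abs_stateDist_succ_sub_le M hπ hπ') ?_ (summable_pow_mul_sum_stateDist_mul M hπ _)
        simpa only [mul_sum] using summable_sum fun s _ => he s
    _ = M.γ / (1 - M.γ) * ∑ s, dDist M π s * ∑ a, |π' s a - π s a| := by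
        rw [tsum_pow_mul_sum_stateDist_mul M hπ]
        ring

theorem sum_abs_dDist_sub_le_sqrt_klDiv (hπ : IsPolicy π) (hπ' : IsPolicy π')
    (habs : ∀ s a, π s a = 0 → π' s a = 0) :
    ∑ s, |dDist M π' s - dDist M π s|
      ≤ M.γ / (1 - M.γ) * √(2 * ∑ s, dDist M π s * klDiv (π' s) (π s)) := by
  have hγ : 0 < 1 - M.γ := by linarith [M.γ_lt_one]
  refine (sum_abs_dDist_sub_le M hπ hπ').trans
    (mul_le_mul_of_nonneg_left ?_ (div_nonneg M.γ_nonneg hγ.le))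
  calc ∑ s, dDist M π s * ∑ a, |π' s a - π s a|
      ≤ ∑ s, dDist M π s * √(2 * klDiv (π' s) (π s)) :=
        sum_le_sum fun s _ => mul_le_mul_of_nonneg_left (sum_abs_sub_le_sqrt_two_mul_klDiv
          (hπ'.1 s) (hπ.1 s) (hπ'.2 s) (hπ.2 s) (habs s)) (dDist_nonneg M hπ s)
    _ ≤ √(∑ s, dDist M π s * (2 * klDiv (π' s) (π s))) := by
        simpa only [smul_eq_mul] using Real.strictConcaveOn_sqrt.concaveOn.le_map_sum
          (fun s _ => dDist_nonneg M hπ s) (sum_dDist M hπ) fun s _ =>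
            Set.mem_Ici.2 (mul_nonneg zero_le_two
              (klDiv_nonneg (hπ'.1 s) (hπ.1 s) (hπ'.2 s) (hπ.2 s) (habs s)))
    _ = √(2 * ∑ s, dDist M π s * klDiv (π' s) (π s)) := by
        simp only [mul_sum, mul_left_comm]

end StateDistDiff

theorem cpo_performance_difference_bound_general {S A : Type} [Fintype S] [Fintype A]
    [Nonempty S] (M : MDP S A) (f : S → A → S → ℝ)
    (π π' : S → A → ℝ) (hπ : IsPolicy π) (hπ' : IsPolicy π')
    (habs : ∀ s a, π s a = 0 → π' s a = 0)
    (V : S → ℝ) (hV : IsValue M π f V) (δ ε : ℝ)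
    (hδ : δ = ∑ s, dDist M π s * klDiv (π' s) (π s))
    (hε : ε = (Finset.univ.sup' Finset.univ_nonempty
      fun s : S => |∑ a, π' s a * adv M f V s a|)) :
    Jret M π' f - Jret M π f ≤
      (1 / (1 - M.γ)) * ((∑ s, dDist M π s * ∑ a, π' s a * adv M f V s a)
        + M.γ * ε * Real.sqrt (2 * δ) / (1 - M.γ)) ∧
    Jret M π' f - Jret M π f ≥
      (1 / (1 - M.γ)) * ((∑ s, dDist M π s * ∑ a, π' s a * adv M f V s a)
        - M.γ * ε * Real.sqrt (2 * δ) / (1 - M.γ)) := by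
  set advBar : S → ℝ := fun s => ∑ a, π' s a * adv M f V s a
  have hγ : 0 < 1 - M.γ := by linarith [M.γ_lt_one]
  have hadvBar : ∀ s, |advBar s| ≤ ε := fun s =>
    hε ▸ le_sup' (fun s => |advBar s|) (mem_univ s)
  have hε0 : 0 ≤ ε := (abs_nonneg _).trans (hadvBar (Classical.arbitrary S))
  have herr : |∑ s, dDist M π' s * advBar s - ∑ s, dDist M π s * advBar s|
      ≤ M.γ * ε * √(2 * δ) / (1 - M.γ) := calc
    _ = |∑ s, (dDist M π' s - dDist M π s) * advBar s| := by
        simp only [sub_mul, sum_sub_distrib]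
    _ ≤ ∑ s, |dDist M π' s - dDist M π s| * ε :=
        (abs_sum_le_sum_abs _ _).trans <| sum_le_sum fun s _ => by
          rw [abs_mul]; exact mul_le_mul_of_nonneg_left (hadvBar s) (abs_nonneg _)
    _ ≤ M.γ / (1 - M.γ) * √(2 * δ) * ε := by
        rw [← sum_mul, hδ]
        exact mul_le_mul_of_nonneg_right (sum_abs_dDist_sub_le_sqrt_klDiv M hπ hπ' habs) hε0
    _ = M.γ * ε * √(2 * δ) / (1 - M.γ) := by ring
  rw [Jret_sub_Jret_eq M hπ hπ' hV]
  have hinv : 0 ≤ 1 / (1 - M.γ) := one_div_nonneg.2 hγ.le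
  constructor <;> refine mul_le_mul_of_nonneg_left ?_ hinv <;> linarith [abs_le.1 herr]

/-- Lemma 4 (CPO performance-difference bound, finite-state version). -/
theorem cpo_performance_difference_bound {S A : Type} [Fintype S] [Fintype A]
    [Nonempty S] [Nonempty A] (M : MDP S A) (f : S → A → S → ℝ)
    (π π' : S → A → ℝ) (hπ : IsPolicy π) (hπ' : IsPolicy π')
    (habs : ∀ s a, π s a = 0 → π' s a = 0)
    (V : S → ℝ) (hV : IsValue M π f V) (δ ε : ℝ)
    (hδ : δ = ∑ s, dDist M π s * klDiv (π' s) (π s))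
    (hε : ε = (Finset.univ.sup' Finset.univ_nonempty
      fun s : S => |∑ a, π' s a * adv M f V s a|)) :
    Jret M π' f - Jret M π f ≤
      (1 / (1 - M.γ)) * ((∑ s, dDist M π s * ∑ a, π' s a * adv M f V s a)
        + M.γ * ε * Real.sqrt (2 * δ) / (1 - M.γ)) ∧
    Jret M π' f - Jret M π f ≥
      (1 / (1 - M.γ)) * ((∑ s, dDist M π s * ∑ a, π' s a * adv M f V s a)
        - M.γ * ε * Real.sqrt (2 * δ) / (1 - M.γ)) :=
  cpo_performance_difference_bound_general M f π π' hπ hπ' habs V hV δ ε hδ hε
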